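/- arXiv:math/9811039 — 3 statements merged into one kernel-verified Lean document; each statement's English description precedes it below -/
import Mathlib

section
/- Let Γ and Γ' be groups such that the monoid semirings ℕ[Γ] and ℕ[Γ'] (with convolution product) are isomorphic as semirings. Then Γ and Γ' are isomorphic as groups. -/
/-!
The augmentation `ℕ[G] → ℕ` sends a unit to a unit of `ℕ`, i.e. to `1`; an element of `ℕ[G]`
whose coefficients sum to `1` is a single basis element `g`. Hence the units of `ℕ[G]` are
exactly the elements of `G`, so `G ≃* ℕ[G]ˣ`, and a semiring isomorphism restricts to units.
-/

theorem Finsupp.exists_eq_single_one_of_sum_eq_one {α : Type*} {a : α →₀ ℕ}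
    (h : (a.sum fun _ n => n) = 1) : ∃ x, a = Finsupp.single x 1 := by
  classical
  obtain ⟨x, hx⟩ := Multiset.card_eq_one.mp ((Finsupp.card_toMultiset a).trans h)
  exact ⟨x, by rw [← Finsupp.toMultiset_toFinsupp a, hx, Multiset.toFinsupp_singleton]⟩

namespace MonoidAlgebra

theorem exists_of_eq_of_isUnit {M : Type*} [Monoid M] {a : ℕ[M]} (ha : IsUnit a) :
    ∃ m, of ℕ M m = a := by
  have hsum : (a.coeff.sum fun _ n => n) = 1 := by
    simpa [lift_apply] using Nat.isUnit_iff.mp (ha.map (lift ℕ ℕ M 1))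
  obtain ⟨m, hm⟩ := Finsupp.exists_eq_single_one_of_sum_eq_one hsum
  exact ⟨m, MonoidAlgebra.ext hm.symm⟩

variable {G : Type*} [Group G]

theorem isUnit_iff_exists_of_eq {a : ℕ[G]} : IsUnit a ↔ ∃ g, of ℕ G g = a := by
  refine ⟨exists_of_eq_of_isUnit, ?_⟩
  rintro ⟨g, rfl⟩
  exact (Group.isUnit g).map (of ℕ G)

noncomputable def mulEquivUnitsNat : G ≃* (ℕ[G])ˣ :=
  MulEquiv.ofBijective ((Units.map (of ℕ G)).comp (toUnits : G ≃* Gˣ).toMonoidHom)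
    ⟨fun _ _ h => of_injective (congrArg Units.val h), fun u => by
      obtain ⟨g, hg⟩ := isUnit_iff_exists_of_eq.mp u.isUnit
      exact ⟨g, Units.ext hg⟩⟩

end MonoidAlgebra

/-- If the monoid semirings `ℕ[Γ]` and `ℕ[Γ']` of two groups (finitely supported
`ℕ`-valued functions with convolution product) are isomorphic as semirings, then
the groups are isomorphic. -/
theorem stmt_0 {Γ Γ' : Type*} [Group Γ] [Group Γ']
    (e : MonoidAlgebra ℕ Γ ≃+* MonoidAlgebra ℕ Γ') :
    Nonempty (Γ ≃* Γ') :=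
  ⟨MonoidAlgebra.mulEquivUnitsNat.trans
    ((Units.mapEquiv e.toMulEquiv).trans MonoidAlgebra.mulEquivUnitsNat.symm)⟩
end

section
/- Let M = ℕ * ℕ be the free monoid on two generators α, β, with the involution x ↦ x̄ exchanging α and β. Define on the free commutative monoid ℕ·M a product by r_x ⊗ r_y = Σ r_{ab}, the sum over all factorizations x = a g, y = ḡ b in M. Then this product is associative. -/
/-!
Both triple products of basis words are sums over pairs of cancellation lengths: `(k, m)` for
`(x ⊗ y) ⊗ z`, cancelling `k` letters between `x` and `y` and then `m` between the result and `z`,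
and `(l, n)` for `x ⊗ (y ⊗ z)`, cancelling `l` letters between `y` and `z` and then `n` between `x`
and the result. If the second cancellation of `(k, m)` stays inside the rest of `y`
(`m ≤ |y| - k`), the two cancellations commute: `(l, n) = (m, k)`. Otherwise it swallows the whole
rest `b` of `y` and reaches into `x`; cancelling `b` against `z` first and then `m + 2k - |y|`
letters against `x` gives `(l, n) = (|y| - k, m + 2k - |y|)`. This map of index pairs is an
involution preserving the resulting word. That it also sends pairs for `x ⊗ (y ⊗ z)` to pairs for
`(x ⊗ y) ⊗ z` is the first direction applied to `z̄, ȳ, x̄`, since `x ↦ x̄` reverses products.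
-/

-- The free monoid on two generators `α, β` is modelled as `List Bool`.
/-- The involution exchanging the two generators: `(u v)‾ = v̄ ū`. -/
def wbar (x : List Bool) : List Bool := (x.map not).reverse

/-- The fusion product on basis elements: `r_x ⊗ r_y = Σ_{x = a g, y = ḡ b} r_{a b}`,
as a multiset (element of the free commutative monoid `ℕ·M`). -/
def fuseBasis (x y : List Bool) : Multiset (List Bool) :=
  ((List.range (x.length + 1)).filterMap fun i =>
    let g := x.drop i
    if y.take g.length = wbar g then some (x.take i ++ y.drop g.length) else none : List (List Bool))

/-- The bilinear extension of the fusion product to `ℕ·M` (multisets of words). -/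
def fuse (S T : Multiset (List Bool)) : Multiset (List Bool) :=
  S.bind fun x => T.bind fun y => fuseBasis x y

@[simp] lemma length_wbar (x : List Bool) : (wbar x).length = x.length := by simp [wbar]

@[simp] lemma wbar_append (x y : List Bool) : wbar (x ++ y) = wbar y ++ wbar x := by simp [wbar]

@[simp] lemma wbar_wbar (x : List Bool) : wbar (wbar x) = x := by simp [wbar, Function.comp_def]

def Cancels (x y : List Bool) (k : ℕ) : Prop :=
  ∃ a g b, x = a ++ g ∧ y = wbar g ++ b ∧ g.length = k

def contract (x y : List Bool) (k : ℕ) : List Bool := x.take (x.length - k) ++ y.drop k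

lemma contract_append (a g b : List Bool) : contract (a ++ g) (wbar g ++ b) g.length = a ++ b := by
  simp [contract]

theorem cancels_iff {x y : List Bool} {k : ℕ} :
    Cancels x y k ↔ k ≤ x.length ∧ y.take k = wbar (x.drop (x.length - k)) := by
  constructor
  · rintro ⟨a, g, b, rfl, rfl, rfl⟩
    simp
  · rintro ⟨hk, h⟩
    refine ⟨x.take (x.length - k), x.drop (x.length - k), y.drop k, by simp, ?_, by simp; omega⟩
    rw [← h, List.take_append_drop]

instance (x y : List Bool) : DecidablePred (Cancels x y) := fun _ =>
  decidable_of_iff _ cancels_iff.symm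

namespace Cancels

variable {x y : List Bool} {k : ℕ}

lemma le_length_left (h : Cancels x y k) : k ≤ x.length := (cancels_iff.1 h).1

lemma le_length_right (h : Cancels x y k) : k ≤ y.length := by
  obtain ⟨a, g, b, -, rfl, rfl⟩ := h
  simp

lemma wbar_swap (h : Cancels x y k) : Cancels (wbar y) (wbar x) k := by
  obtain ⟨a, g, b, rfl, rfl, rfl⟩ := h
  exact ⟨wbar b, g, wbar a, by simp, by simp, rfl⟩

lemma contract_wbar_swap (h : Cancels x y k) :
    contract (wbar y) (wbar x) k = wbar (contract x y k) := by
  obtain ⟨a, g, b, rfl, rfl, rfl⟩ := h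
  rw [contract_append]
  simpa using contract_append (wbar b) g (wbar a)

end Cancels

lemma cancels_wbar_swap_iff {x y : List Bool} {k : ℕ} : Cancels (wbar y) (wbar x) k ↔ Cancels x y k :=
  ⟨fun h => by simpa using h.wbar_swap, Cancels.wbar_swap⟩

lemma length_contract_le (x y : List Bool) (k : ℕ) :
    (contract x y k).length ≤ x.length + y.length := by
  simp only [contract, List.length_append, List.length_take, List.length_drop]
  omega

theorem fuseBasis_eq_sum_range (x y : List Bool) :
    fuseBasis x y = ∑ k ∈ Finset.range (x.length + 1),
      if Cancels x y k then ({contract x y k} : Multiset (List Bool)) else 0 := by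
  rw [fuseBasis, List.filterMap_eq_flatMap_toList, ← Multiset.coe_bind]
  conv_rhs => rw [← Finset.sum_range_reflect (δ := Multiset (List Bool))]
  show Finset.sum (Finset.range (x.length + 1)) _ = _
  refine Finset.sum_congr rfl fun k hk => ?_
  have hk : k ≤ x.length := Nat.lt_succ_iff.1 (Finset.mem_range.1 hk)
  simp only [add_tsub_cancel_right, List.length_drop, cancels_iff, Nat.sub_le, true_and, contract,
    Nat.sub_sub_self hk]
  split_ifs <;> rfl

theorem fuseBasis_eq_sum {x y : List Bool} {s : Finset ℕ} (hs : ∀ k, Cancels x y k → k ∈ s) :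
    fuseBasis x y = ∑ k ∈ s with Cancels x y k, {contract x y k} := by
  rw [fuseBasis_eq_sum_range, ← Finset.sum_filter]
  congr 1
  ext k
  simp only [Finset.mem_filter, Finset.mem_range]
  exact ⟨fun ⟨_, h⟩ => ⟨hs k h, h⟩, fun ⟨_, h⟩ => ⟨Nat.lt_succ_of_le h.le_length_left, h⟩⟩

def assocIndex (n : ℕ) (p : ℕ × ℕ) : ℕ × ℕ :=
  if p.2 ≤ n - p.1 then (p.2, p.1) else (n - p.1, p.2 + 2 * p.1 - n)

lemma assocIndex_assocIndex {n : ℕ} {p : ℕ × ℕ} (h : p.1 ≤ n) : assocIndex n (assocIndex n p) = p := by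
  unfold assocIndex
  split_ifs <;> ext <;> simp only at * <;> omega

theorem Cancels.assoc {x y z : List Bool} {k m : ℕ} (hxy : Cancels x y k)
    (h : Cancels (contract x y k) z m) :
    Cancels y z (assocIndex y.length (k, m)).1 ∧
      Cancels x (contract y z (assocIndex y.length (k, m)).1) (assocIndex y.length (k, m)).2 ∧
      contract x (contract y z (assocIndex y.length (k, m)).1) (assocIndex y.length (k, m)).2 =
        contract (contract x y k) z m := by
  obtain ⟨a, g, b, rfl, rfl, rfl⟩ := hxy
  rw [contract_append] at h ⊢
  obtain ⟨c, h, d, hab, rfl, rfl⟩ := h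
  rw [hab, contract_append]
  rcases List.append_eq_append_iff.1 hab with ⟨b', rfl, rfl⟩ | ⟨c', rfl, rfl⟩
  · have : assocIndex (wbar g ++ (b' ++ h)).length (g.length, h.length) = (h.length, g.length) := by
      simp only [assocIndex, List.length_append, length_wbar]
      rw [if_pos (by omega)]
    rw [this, ← List.append_assoc, contract_append]
    exact ⟨⟨_, _, _, rfl, rfl, rfl⟩, ⟨a, g, b' ++ d, rfl, by simp, rfl⟩,
      by simpa using contract_append a g (b' ++ d)⟩
  · have : assocIndex (wbar g ++ b).length (g.length, (c' ++ b).length) =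
        (b.length, (c' ++ g).length) := by
      simp only [assocIndex, List.length_append, length_wbar]
      split_ifs <;> ext <;> simp only <;> omega
    rw [this, wbar_append, List.append_assoc, contract_append]
    exact ⟨⟨_, _, _, rfl, rfl, rfl⟩, ⟨c, c' ++ g, d, by simp, by simp, rfl⟩,
      by simpa using contract_append c (c' ++ g) d⟩

theorem Cancels.assoc_symm {x y z : List Bool} {l n : ℕ} (hyz : Cancels y z l)
    (h : Cancels x (contract y z l) n) :
    Cancels x y (assocIndex y.length (l, n)).1 ∧
      Cancels (contract x y (assocIndex y.length (l, n)).1) z (assocIndex y.length (l, n)).2 := by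
  have := (cancels_wbar_swap_iff.2 hyz).assoc (by rwa [hyz.contract_wbar_swap, cancels_wbar_swap_iff])
  simp only [length_wbar] at this
  have hxy := cancels_wbar_swap_iff.1 this.1
  exact ⟨hxy, by rw [← cancels_wbar_swap_iff, ← hxy.contract_wbar_swap]; exact this.2.1⟩

lemma Multiset.finsetSum_bind {ι α β : Type*} (s : Finset ι) (f : ι → Multiset α)
    (g : α → Multiset β) : (∑ i ∈ s, f i).bind g = ∑ i ∈ s, (f i).bind g :=
  map_sum (Multiset.sumAddMonoidHom.comp (Multiset.mapAddMonoidHom g)) f s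

lemma Finset.sum_filter_sum_filter {ι κ M : Type*} [AddCommMonoid M] (s : Finset ι)
    (t : Finset κ) (p : ι → Prop) (q : ι → κ → Prop) [DecidablePred p] [∀ i, DecidablePred (q i)]
    (f : ι → κ → M) :
    ∑ i ∈ s with p i, ∑ j ∈ t with q i j, f i j = ∑ x ∈ s ×ˢ t with p x.1 ∧ q x.1 x.2, f x.1 x.2 :=
  (Finset.sum_finset_product ((s ×ˢ t).filter fun x => p x.1 ∧ q x.1 x.2) (s.filter p)
    (fun i => t.filter (q i)) (by simp [and_and_and_comm]) (f := fun x => f x.1 x.2)).symm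

theorem fuseBasis_bind_eq_sum {x y : List Bool} {s : Finset ℕ} (hs : ∀ k, Cancels x y k → k ∈ s)
    (g : List Bool → Multiset (List Bool)) :
    (fuseBasis x y).bind g = ∑ k ∈ s with Cancels x y k, g (contract x y k) := by
  rw [fuseBasis_eq_sum hs, Multiset.finsetSum_bind]
  simp only [Multiset.singleton_bind]

theorem fuseBasis_bind_fuseBasis (x y z : List Bool) :
    (fuseBasis x y).bind (fuseBasis · z) = (fuseBasis y z).bind (fuseBasis x ·) := by
  set s := Finset.range (x.length + y.length + 1)
  have hs : ∀ {n}, n ≤ x.length + y.length → n ∈ s :=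
    fun h => Finset.mem_range.2 (Nat.lt_succ_of_le h)
  have hsx : ∀ {n}, n ≤ x.length → n ∈ s := fun h => hs (h.trans (Nat.le_add_right _ _))
  have hsy : ∀ {n}, n ≤ y.length → n ∈ s := fun h => hs (h.trans (Nat.le_add_left _ _))
  have hL : (fuseBasis x y).bind (fuseBasis · z) =
      ∑ p ∈ s ×ˢ s with Cancels x y p.1 ∧ Cancels (contract x y p.1) z p.2,
        {contract (contract x y p.1) z p.2} := by
    rw [fuseBasis_bind_eq_sum fun _ h => hsx h.le_length_left]
    exact (Finset.sum_congr rfl fun k _ =>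
      fuseBasis_eq_sum fun _ h => hs (h.le_length_left.trans (length_contract_le x y k))).trans
      (Finset.sum_filter_sum_filter _ _ _ _ fun k m => {contract (contract x y k) z m})
  have hR : (fuseBasis y z).bind (fuseBasis x ·) =
      ∑ p ∈ s ×ˢ s with Cancels y z p.1 ∧ Cancels x (contract y z p.1) p.2,
        {contract x (contract y z p.1) p.2} := by
    rw [fuseBasis_bind_eq_sum fun _ h => hsy h.le_length_left]
    exact (Finset.sum_congr rfl fun _ _ => fuseBasis_eq_sum fun _ h => hsx h.le_length_left).trans
      (Finset.sum_filter_sum_filter _ _ _ _ fun l n => {contract x (contract y z l) n})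
  rw [hL, hR]
  refine Finset.sum_nbij' (assocIndex y.length) (assocIndex y.length) ?_ ?_ ?_ ?_ ?_ <;>
    simp only [Finset.mem_filter, Finset.mem_product, and_imp, Prod.forall]
  · intro k m _ _ hxy h
    obtain ⟨hyz, hx, -⟩ := hxy.assoc h
    exact ⟨⟨hsy hyz.le_length_left, hsx hx.le_length_left⟩, hyz, hx⟩
  · intro l n _ _ hyz h
    obtain ⟨hxy, hz⟩ := hyz.assoc_symm h
    exact ⟨⟨hsx hxy.le_length_left, hs (hz.le_length_left.trans (length_contract_le _ _ _))⟩,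
      hxy, hz⟩
  · exact fun k m _ _ hxy _ => assocIndex_assocIndex hxy.le_length_right
  · exact fun l n _ _ hyz _ => assocIndex_assocIndex hyz.le_length_left
  · exact fun k m _ _ hxy h => by rw [(hxy.assoc h).2.2]

/-- The fusion product of the free unitary quantum group is associative. -/
theorem stmt_2 (S T U : Multiset (List Bool)) :
    fuse (fuse S T) U = fuse S (fuse T U) := by
  simp only [fuse, Multiset.bind_assoc]
  refine Multiset.bind_congr fun x _ => Multiset.bind_congr fun y _ => ?_
  rw [Multiset.bind_bind]
  exact Multiset.bind_congr fun z _ => fuseBasis_bind_fuseBasis x y z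
end

section
/- Let R be a commutative semiring with additive basis I ∋ 1 (so (R, +) ≅ ℕ·I) and an involution a ↦ ā on I such that for a, b ∈ I, the basis element 1 occurs in a ⊗ b iff b = ā, and occurring with multiplicity one; assume Frobenius reciprocity: for a, b, c ∈ I, the multiplicity of c in a ⊗ b equals the multiplicity of a in c ⊗ b̄. Fix v ∈ R, a sum of basis elements, with 1 ≤ v, v = v̄, and such that every a ∈ I occurs in some tensor power v^{⊗ n}. Then d_v(a, b) := inf { n ∈ ℕ : 1 occurs in a ⊗ b̄ ⊗ v^{⊗ n} } defines a metric on I. -/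
open scoped Classical

/-- A fusion semiring: a semiring `R` which is additively free on a basis `I`
containing the unit, with an involution `a ↦ ā` on `I` such that the basis element
`1` occurs in `a ⊗ b` iff `b = ā` (and then with multiplicity one), and satisfying
Frobenius reciprocity. -/
structure FusionData (I : Type*) (R : Type*) [Semiring R] where
  /-- the additive identification `R ≅ ℕ·I` -/
  toFun : (I →₀ ℕ) ≃+ R
  /-- the index of the basis element `1` -/
  unit : I
  /-- the involution on `I` -/
  bar : I → I
  bar_invol : Function.Involutive bar
  map_unit : toFun (Finsupp.single unit 1) = 1
  mult_one : ∀ a b : I,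
    toFun.symm (toFun (Finsupp.single a 1) * toFun (Finsupp.single b 1)) unit =
      if b = bar a then 1 else 0
  frob1 : ∀ a b c : I,
    toFun.symm (toFun (Finsupp.single a 1) * toFun (Finsupp.single b 1)) c =
      toFun.symm (toFun (Finsupp.single c 1) * toFun (Finsupp.single (bar b) 1)) a
  frob2 : ∀ a b c : I,
    toFun.symm (toFun (Finsupp.single a 1) * toFun (Finsupp.single b 1)) c =
      toFun.symm (toFun (Finsupp.single (bar a) 1) * toFun (Finsupp.single c 1)) b

variable {I R : Type*} [Semiring R]

/-- The basis element of `R` attached to `a ∈ I`. -/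
noncomputable def FusionData.elt (F : FusionData I R) (a : I) : R := F.toFun (Finsupp.single a 1)

/-- The multiplicity (coefficient) of the basis element `a` in `x ∈ R`. -/
noncomputable def FusionData.coef (F : FusionData I R) (x : R) (a : I) : ℕ := F.toFun.symm x a

/-- `a` occurs in `x` (with multiplicity at least one). -/
def FusionData.occurs (F : FusionData I R) (a : I) (x : R) : Prop := 1 ≤ F.coef x a

/-- The distance `d_v(a,b) = inf { n : 1 occurs in a ⊗ b̄ ⊗ v^{⊗n} }`. -/
noncomputable def FusionData.dist (F : FusionData I R) (v : R) (a b : I) : ℕ :=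
  sInf {n : ℕ | F.occurs F.unit (F.elt a * F.elt (F.bar b) * v ^ n)}

namespace FusionData
variable (F : FusionData I R)

lemma coef_add (x y : R) (c : I) : F.coef (x + y) c = F.coef x c + F.coef y c := by
  simp [coef, map_add]

lemma coef_elt (a c : I) : F.coef (F.elt a) c = if a = c then 1 else 0 := by
  simp [coef, elt, Finsupp.single_apply]

lemma coef_ext {x y : R} (h : ∀ c, F.coef x c = F.coef y c) : x = y :=
  F.toFun.symm.injective (Finsupp.ext h)

lemma mult_one' (a b : I) : F.coef (F.elt a * F.elt b) F.unit = if b = F.bar a then 1 else 0 :=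
  F.mult_one a b

lemma frob1' (a b c : I) : F.coef (F.elt a * F.elt b) c = F.coef (F.elt c * F.elt (F.bar b)) a :=
  F.frob1 a b c

lemma frob2' (a b c : I) : F.coef (F.elt a * F.elt b) c = F.coef (F.elt (F.bar a) * F.elt c) b :=
  F.frob2 a b c

lemma expandL (x y : R) (c : I) :
    F.coef (x * y) c = (F.toFun.symm x).sum (fun a n => n * F.coef (F.elt a * y) c) := by
  conv_lhs => rw [coef, show x = F.toFun (F.toFun.symm x) from (F.toFun.apply_symm_apply x).symm,
    ← Finsupp.sum_single (F.toFun.symm x), map_finsuppSum]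
  rw [Finsupp.sum_mul, map_finsuppSum, Finsupp.sum_apply]
  refine Finsupp.sum_congr fun a _ => ?_
  have : Finsupp.single a ((F.toFun.symm x) a) = ((F.toFun.symm x) a) • Finsupp.single a 1 := by
    simp
  rw [this, map_nsmul, smul_mul_assoc, map_nsmul, Finsupp.smul_apply, smul_eq_mul]
  rfl

lemma expandR (x y : R) (c : I) :
    F.coef (x * y) c = (F.toFun.symm y).sum (fun b n => n * F.coef (x * F.elt b) c) := by
  conv_lhs => rw [coef, show y = F.toFun (F.toFun.symm y) from (F.toFun.apply_symm_apply y).symm,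
    ← Finsupp.sum_single (F.toFun.symm y), map_finsuppSum]
  rw [Finsupp.mul_sum, map_finsuppSum, Finsupp.sum_apply]
  refine Finsupp.sum_congr fun b _ => ?_
  have : Finsupp.single b ((F.toFun.symm y) b) = ((F.toFun.symm y) b) • Finsupp.single b 1 := by
    simp
  rw [this, map_nsmul, mul_smul_comm, map_nsmul, Finsupp.smul_apply, smul_eq_mul]
  rfl


lemma expand2 (x y : R) (c : I) :
    F.coef (x * y) c = (F.toFun.symm x).sum fun a n => (F.toFun.symm y).sum fun b m =>
      n * (m * F.coef (F.elt a * F.elt b) c) := by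
  rw [expandL]
  refine Finsupp.sum_congr fun a _ => ?_
  rw [expandR, Finsupp.mul_sum]

lemma coef_elt_mul_unit (a : I) (x : R) :
    F.coef (F.elt a * x) F.unit = F.coef x (F.bar a) := by
  rw [expandR]
  simp only [mult_one', mul_ite, mul_one, mul_zero]
  rw [Finsupp.sum_ite_eq']
  by_cases h : F.bar a ∈ (F.toFun.symm x).support
  · simp [h, coef]
  · simp only [h, if_neg, coef]
    simp only [Finsupp.notMem_support_iff] at h
    simp [h]

lemma bar_unit : F.bar F.unit = F.unit := by
  have h := F.mult_one' F.unit F.unit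
  have h2 : F.coef 1 F.unit = 1 := by rw [← F.map_unit]; simp [coef]
  rw [show F.elt F.unit = 1 from F.map_unit, one_mul, h2] at h
  by_contra hne
  rw [if_neg (fun hh => hne hh.symm)] at h
  exact one_ne_zero h

lemma coef_conj (a b c : I) :
    F.coef (F.elt a * F.elt b) c = F.coef (F.elt (F.bar b) * F.elt (F.bar a)) (F.bar c) := by
  rw [F.frob2' a b c, F.frob1' (F.bar a) c b, F.frob2' b (F.bar c) (F.bar a)]

noncomputable def conj (x : R) : R :=
  F.toFun (Finsupp.equivMapDomain (F.bar_invol.toPerm F.bar) (F.toFun.symm x))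

lemma coef_conj_apply (x : R) (c : I) : F.coef (F.conj x) c = F.coef x (F.bar c) := by
  simp [conj, coef, Finsupp.equivMapDomain_apply, Function.Involutive.toPerm]

lemma conj_elt (a : I) : F.conj (F.elt a) = F.elt (F.bar a) := by
  simp [conj, elt, Finsupp.equivMapDomain_single, Function.Involutive.toPerm]

lemma conj_mul (x y : R) : F.conj (x * y) = F.conj y * F.conj x := by
  refine F.coef_ext fun c => ?_
  rw [coef_conj_apply, expand2, F.expand2 (F.conj y)]
  simp only [conj, AddEquiv.symm_apply_apply]
  rw [Finsupp.sum_equivMapDomain, Finsupp.sum_comm]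
  refine Finsupp.sum_congr fun a _ => ?_
  rw [Finsupp.sum_equivMapDomain]
  refine Finsupp.sum_congr fun b _ => ?_
  simp only [Function.Involutive.coe_toPerm]
  rw [F.coef_conj b a, F.bar_invol]
  ring

lemma coef_mul_unit_comm (x y : R) : F.coef (x * y) F.unit = F.coef (y * x) F.unit := by
  rw [expand2, F.expand2 y, Finsupp.sum_comm]
  refine Finsupp.sum_congr fun a _ => Finsupp.sum_congr fun b _ => ?_
  have hiff : (a = F.bar b) ↔ (b = F.bar a) :=
    ⟨fun h => by rw [h, F.bar_invol], fun h => by rw [h, F.bar_invol]⟩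
  have key : F.coef (F.elt b * F.elt a) F.unit = F.coef (F.elt a * F.elt b) F.unit := by
    rw [mult_one', mult_one', if_congr hiff rfl rfl]
  rw [key]; ring

lemma occurs_iff (d : I) (x : R) : 1 ≤ F.coef x d ↔ ∃ z : R, x = F.elt d + z := by
  constructor
  · intro h
    have hle : Finsupp.single d 1 ≤ F.toFun.symm x := Finsupp.single_le_iff.mpr h
    refine ⟨F.toFun (F.toFun.symm x - Finsupp.single d 1), ?_⟩
    calc x = F.toFun (F.toFun.symm x) := (F.toFun.apply_symm_apply x).symm
      _ = F.toFun (Finsupp.single d 1 + (F.toFun.symm x - Finsupp.single d 1)) := by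
          rw [add_tsub_cancel_of_le hle]
      _ = F.elt d + F.toFun (F.toFun.symm x - Finsupp.single d 1) := by
          rw [map_add]; rfl
  · rintro ⟨z, rfl⟩
    rw [coef_add, coef_elt, if_pos rfl]
    omega

lemma conj_one : F.conj 1 = 1 := by
  rw [show (1 : R) = F.elt F.unit from F.map_unit.symm, conj_elt, bar_unit]

lemma conj_pow {v : R} (hv : ∀ a : I, F.coef v a = F.coef v (F.bar a)) (n : ℕ) :
    F.conj (v ^ n) = v ^ n := by
  have hcv : F.conj v = v := F.coef_ext fun c => by rw [coef_conj_apply]; exact (hv c).symm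
  induction n with
  | zero => rw [pow_zero, conj_one]
  | succ k ih => rw [pow_succ, conj_mul, hcv, ih, ← pow_succ', ← pow_succ]

lemma key (v : R) (a b : I) (n : ℕ) :
    F.coef (F.elt a * F.elt (F.bar b) * v ^ n) F.unit
      = F.coef (F.elt (F.bar b) * v ^ n) (F.bar a) := by
  rw [mul_assoc, coef_elt_mul_unit]

lemma symmcoef {v : R} (hv : ∀ a : I, F.coef v a = F.coef v (F.bar a)) (a b : I) (n : ℕ) :
    F.coef (F.elt a * F.elt (F.bar b) * v ^ n) F.unit
      = F.coef (F.elt b * F.elt (F.bar a) * v ^ n) F.unit := by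
  have hconj : ∀ z : R, F.coef (F.conj z) F.unit = F.coef z F.unit := fun z => by
    rw [coef_conj_apply, bar_unit]
  calc F.coef (F.elt a * F.elt (F.bar b) * v ^ n) F.unit
      = F.coef (v ^ n * (F.elt a * F.elt (F.bar b))) F.unit := F.coef_mul_unit_comm _ _
    _ = F.coef (F.conj (v ^ n * (F.elt a * F.elt (F.bar b)))) F.unit := (hconj _).symm
    _ = F.coef (F.elt b * F.elt (F.bar a) * v ^ n) F.unit := by
        rw [conj_mul, conj_mul, conj_elt, conj_elt, F.bar_invol, F.conj_pow hv]

end FusionData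

/-- Proposition 5.1: if `v` is a sum of basis elements with `1 ≤ v`, `v = v̄`, such that
every `a ∈ I` occurs in some tensor power of `v`, then `d_v` is a metric on `I`:
it takes finite values (the defining sets are nonempty), is symmetric, vanishes
exactly on the diagonal, and satisfies the triangle inequality. -/
theorem stmt_6 (F : FusionData I R) (v : R)
    (hsum : ∀ a : I, F.coef v a ≤ 1)
    (hone : F.occurs F.unit v)
    (hbar : ∀ a : I, F.coef v a = F.coef v (F.bar a))
    (hgen : ∀ a : I, ∃ n : ℕ, F.occurs a (v ^ n)) :
    (∀ a b : I, {n : ℕ | F.occurs F.unit (F.elt a * F.elt (F.bar b) * v ^ n)}.Nonempty) ∧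
      (∀ a b : I, F.dist v a b = F.dist v b a) ∧
      (∀ a b : I, F.dist v a b = 0 ↔ a = b) ∧
      (∀ a b c : I, F.dist v a c ≤ F.dist v a b + F.dist v b c) := by
  have hne : ∀ a b : I,
      {n : ℕ | F.occurs F.unit (F.elt a * F.elt (F.bar b) * v ^ n)}.Nonempty := by
    intro a b
    have h0 : 1 ≤ F.coef (F.elt (F.bar a) * F.elt a) F.unit := by
      rw [F.mult_one', if_pos (F.bar_invol a).symm]
    obtain ⟨z, hz⟩ := (F.occurs_iff F.unit _).mp h0
    have h1 : 1 ≤ F.coef (F.elt b * F.elt (F.bar a) * F.elt a) b := by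
      rw [mul_assoc, hz, mul_add, show F.elt F.unit = 1 from F.map_unit, mul_one,
        F.coef_add, F.coef_elt, if_pos rfl]
      omega
    rw [F.expandL] at h1
    obtain ⟨d, hd, hdne⟩ := Finset.exists_ne_zero_of_sum_ne_zero
      (s := (F.toFun.symm (F.elt b * F.elt (F.bar a))).support)
      (f := fun d => (F.toFun.symm (F.elt b * F.elt (F.bar a))) d
        * F.coef (F.elt d * F.elt a) b)
      (by
        intro hzero
        rw [show ((F.toFun.symm (F.elt b * F.elt (F.bar a))).sum fun d n =>
          n * F.coef (F.elt d * F.elt a) b) = ∑ d ∈ (F.toFun.symm (F.elt b * F.elt (F.bar a))).support,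
            (F.toFun.symm (F.elt b * F.elt (F.bar a))) d * F.coef (F.elt d * F.elt a) b from rfl,
          hzero] at h1
        omega)
    have hdd : 1 ≤ F.coef (F.elt b * F.elt (F.bar a)) d := by
      have : (F.toFun.symm (F.elt b * F.elt (F.bar a))) d ≠ 0 := fun h => hdne (by rw [h, zero_mul])
      have h' : F.coef (F.elt b * F.elt (F.bar a)) d = (F.toFun.symm (F.elt b * F.elt (F.bar a))) d := rfl
      omega
    have h2 : 1 ≤ F.coef (F.elt (F.bar b) * F.elt d) (F.bar a) := by
      have hf := F.frob2' (F.bar b) d (F.bar a)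
      rw [F.bar_invol] at hf
      rw [hf]
      exact hdd
    obtain ⟨n, hn⟩ := hgen d
    obtain ⟨w, hw⟩ := (F.occurs_iff d (v ^ n)).mp hn
    refine ⟨n, ?_⟩
    show 1 ≤ F.coef (F.elt a * F.elt (F.bar b) * v ^ n) F.unit
    rw [F.key, hw, mul_add, F.coef_add]
    omega
  refine ⟨hne, ?_, ?_, ?_⟩
  · intro a b
    unfold FusionData.dist
    congr 1
    ext n
    show 1 ≤ F.coef _ F.unit ↔ 1 ≤ F.coef _ F.unit
    rw [F.symmcoef hbar]
  · intro a b
    unfold FusionData.dist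
    rw [Nat.sInf_eq_zero]
    have h0 : F.occurs F.unit (F.elt a * F.elt (F.bar b) * v ^ 0) ↔ a = b := by
      show 1 ≤ F.coef (F.elt a * F.elt (F.bar b) * v ^ 0) F.unit ↔ a = b
      rw [pow_zero, mul_one, F.mult_one']
      constructor
      · intro h
        by_cases hc : F.bar b = F.bar a
        · have := congrArg F.bar hc
          rwa [F.bar_invol, F.bar_invol, eq_comm] at this
        · rw [if_neg hc] at h; omega
      · rintro rfl; rw [if_pos rfl]
    constructor
    · rintro (h | h)
      · exact h0.mp h
      · exact absurd h (Set.nonempty_iff_ne_empty.mp (hne a b))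
    · rintro rfl
      exact Or.inl (h0.mpr rfl)
  · intro a b c
    have h1 := Nat.sInf_mem (hne a b)
    have h2 := Nat.sInf_mem (hne b c)
    set n := F.dist v a b with hndef
    set m := F.dist v b c with hmdef
    have h1' : 1 ≤ F.coef (F.elt (F.bar b) * v ^ n) (F.bar a) := by
      rw [← F.key]; exact h1
    have h2' : 1 ≤ F.coef (F.elt (F.bar c) * v ^ m) (F.bar b) := by
      rw [← F.key]; exact h2
    obtain ⟨z, hz⟩ := (F.occurs_iff _ _).mp h1'
    obtain ⟨w, hw⟩ := (F.occurs_iff _ _).mp h2'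
    have hkey : (m + n) ∈ {k : ℕ | F.occurs F.unit (F.elt a * F.elt (F.bar c) * v ^ k)} := by
      show 1 ≤ F.coef (F.elt a * F.elt (F.bar c) * v ^ (m + n)) F.unit
      rw [F.key]
      have : F.elt (F.bar c) * v ^ (m + n) = F.elt (F.bar a) + (z + w * v ^ n) := by
        rw [pow_add, ← mul_assoc, hw, add_mul, hz, add_assoc]
      rw [this, F.coef_add, F.coef_elt, if_pos rfl]
      omega
    have hfin : F.dist v a c ≤ m + n := Nat.sInf_le hkey
    omega
end
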